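/- Suppose n is even, the interaction graph is complete (N_i = V \ {i} for every i), and the initial opinions are symmetric about 1/2: for every i ∈ {1,…,n/2} there exists η_i(0) ∈ (0,1/2) with p_i(0) = 1/2 − η_i(0) and p_{n/2+i}(0) = 1/2 + η_i(0). Let ε* denote the unique positive solution of x³ + x²/(2(n−1)) + (3/4)x − 1/(8(n−1)) = 0; then ε* < 1/(6(n−1)), and there exists k* ∈ ℕ such that for all k ≥ k* and all j ∈ V: |p_j(k) − 1/2| ≤ ε* and (p_j(k) − 1/2)(p_j(k+1) − 1/2) < 0. -/

import Mathlib

/-!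
Write `e = p - 1/2` and `c = n - 1`. While the opinions stay mirror-symmetric
(`p (σ j) = 1 - p j` for the pairing `σ` of the two halves), exactly half of the agents act `1`,
and an agent's deviation moves by `e ↦ g e` if it acts `1` and by `e ↦ -g (-e)` if it acts `0`.
These two maps are conjugate under `e ↦ -e`, so the symmetry persists.

`g` is increasing on `[0, ∞)` with `g 0 = -1/(8c) > -ε*` and `g ε* = 0`, hence the punctured
interval `0 < |e| < ε*` is invariant and each step in it flips the sign of `e`. An agent with
`e ≤ -ε*` increases by a fixed amount per step until it enters that interval; landing exactly on
`-ε*` sends it to `0` and then, by the tie-break, to `1/(8c) < ε*`.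
-/

open Finset

/-- With `c + 1` agents of which half act `1`, an agent acting `1` moves its deviation
`e = p - 1/2` to `codaMap c e`, and one acting `0` moves it to `-codaMap c (-e)`. -/
noncomputable def codaMap (c x : ℝ) : ℝ :=
  x ^ 3 + x ^ 2 / (2 * c) + 3 / 4 * x - 1 / (8 * c)

section CodaMap

variable {c ε x : ℝ}

lemma codaMap_zero (c : ℝ) : codaMap c 0 = -(1 / (8 * c)) := by
  simp [codaMap]

lemma codaMap_eq_sub_mul (hc : c ≠ 0) (x : ℝ) :
    codaMap c x = x - (1 / 4 - x ^ 2) * (1 / (2 * c) + x) := by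
  unfold codaMap; field_simp; ring

lemma codaMap_strictMonoOn (hc : 0 < c) : StrictMonoOn (codaMap c) (Set.Ici 0) := by
  intro x hx y hy hxy
  simp only [Set.mem_Ici] at hx hy
  have hfac : codaMap c y - codaMap c x =
      (y - x) * (y ^ 2 + x * y + x ^ 2 + (x + y) / (2 * c) + 3 / 4) := by
    unfold codaMap; field_simp; ring
  have hpos : 0 < y ^ 2 + x * y + x ^ 2 + (x + y) / (2 * c) + 3 / 4 := by positivity
  nlinarith [mul_pos (sub_pos.2 hxy) hpos]

lemma lt_one_div_six_mul_of_codaMap_eq_zero (hc : 0 < c) (hε : 0 < ε)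
    (hroot : codaMap c ε = 0) : ε < 1 / (6 * c) := by
  unfold codaMap at hroot
  field_simp at hroot
  rw [lt_div_iff₀ (by positivity)]
  nlinarith [pow_pos hε 3, pow_pos hε 2]

lemma one_div_eight_mul_lt_of_codaMap_eq_zero (hc : 1 ≤ c) (hε : 0 ≤ ε)
    (hroot : codaMap c ε = 0) : 1 / (8 * c) < ε := by
  have hc0 : 0 < c := by linarith
  have hval : codaMap c (1 / (8 * c)) = (5 - 16 * c ^ 2) / (512 * c ^ 3) := by
    unfold codaMap; field_simp; ring
  have hneg : codaMap c (1 / (8 * c)) < codaMap c ε := by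
    rw [hroot, hval]
    exact div_neg_of_neg_of_pos (by nlinarith) (by positivity)
  exact (codaMap_strictMonoOn hc0).lt_iff_lt (by simp only [Set.mem_Ici]; positivity) hε |>.mp hneg

lemma codaMap_mem_Ioo (hc : 1 ≤ c) (hroot : codaMap c ε = 0) (hx : x ∈ Set.Ioo 0 ε) :
    codaMap c x ∈ Set.Ioo (-ε) 0 := by
  have hmono := codaMap_strictMonoOn (c := c) (by linarith)
  have hε : (0 : ℝ) ≤ ε := hx.1.le.trans hx.2.le
  have h0 := hmono (Set.mem_Ici.2 le_rfl) hx.1.le hx.1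
  have hε' := hmono hx.1.le hε hx.2
  rw [codaMap_zero] at h0
  rw [hroot] at hε'
  exact ⟨by linarith [one_div_eight_mul_lt_of_codaMap_eq_zero hc hε hroot], hε'⟩

lemma codaMap_pos (hc : 0 < c) (hε : 0 ≤ ε) (hroot : codaMap c ε = 0) (hx : ε < x) :
    0 < codaMap c x :=
  hroot ▸ codaMap_strictMonoOn hc hε (hε.trans hx.le) hx

lemma add_le_neg_codaMap_neg {x₀ : ℝ} (hc : 0 < c) (hx₀ : -(1 / 2) < x₀) (hx₀x : x₀ ≤ x)
    (hx : x < 0) : x + (1 / 4 - x₀ ^ 2) / (2 * c) ≤ -codaMap c (-x) := by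
  rw [codaMap_eq_sub_mul hc.ne', neg_sq]
  have hsq : 1 / 4 - x₀ ^ 2 ≤ 1 / 4 - x ^ 2 := by nlinarith
  have hpos : 0 ≤ 1 / 4 - x ^ 2 := by nlinarith
  calc x + (1 / 4 - x₀ ^ 2) / (2 * c) ≤ x + (1 / 4 - x ^ 2) * (1 / (2 * c)) := by
        rw [mul_one_div]; gcongr
    _ ≤ x + (1 / 4 - x ^ 2) * (1 / (2 * c) + -x) := by gcongr; linarith
    _ = _ := by ring

end CodaMap

/-- `e k` plays the role of `p i k - 1/2` for one agent; the last field is the tie-break at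
`p = 1/2`, which sends an agent arriving at `1/2` from below to the action `0`. -/
structure IsReducedOrbit (c : ℝ) (e : ℕ → ℝ) : Prop where
  succ_of_pos : ∀ k, 0 < e k → e (k + 1) = codaMap c (e k)
  succ_of_neg : ∀ k, e k < 0 → e (k + 1) = -codaMap c (-e k)
  succ_succ_of_neg_of_eq_zero : ∀ k, e k < 0 → e (k + 1) = 0 → e (k + 2) = -codaMap c 0

namespace IsReducedOrbit

variable {c ε : ℝ} {e : ℕ → ℝ}

lemma trap_succ (he : IsReducedOrbit c e) (hc : 1 ≤ c) (hroot : codaMap c ε = 0) {k : ℕ}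
    (hk : 0 < |e k| ∧ |e k| < ε) :
    (0 < |e (k + 1)| ∧ |e (k + 1)| < ε) ∧ e k * e (k + 1) < 0 := by
  rcases lt_or_gt_of_ne (abs_pos.mp hk.1) with hneg | hpos
  · rw [abs_of_neg hneg] at hk
    obtain ⟨h1, h2⟩ := codaMap_mem_Ioo hc hroot ⟨hk.1, hk.2⟩
    rw [he.succ_of_neg k hneg, abs_of_pos (by linarith)]
    exact ⟨⟨by linarith, by linarith⟩, mul_neg_of_neg_of_pos hneg (by linarith)⟩
  · rw [abs_of_pos hpos] at hk
    obtain ⟨h1, h2⟩ := codaMap_mem_Ioo hc hroot ⟨hk.1, hk.2⟩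
    rw [he.succ_of_pos k hpos, abs_of_neg h2]
    exact ⟨⟨by linarith, by linarith⟩, mul_neg_of_pos_of_neg hpos h2⟩

lemma forall_ge_of_trap (he : IsReducedOrbit c e) (hc : 1 ≤ c) (hroot : codaMap c ε = 0)
    {K : ℕ} (hK : 0 < |e K| ∧ |e K| < ε) :
    ∀ k ≥ K, |e k| ≤ ε ∧ e k * e (k + 1) < 0 := by
  have htrap : ∀ k ≥ K, 0 < |e k| ∧ |e k| < ε := fun k hk =>
    Nat.le_induction hK (fun k _ ih => (he.trap_succ hc hroot ih).1) k hk
  exact fun k hk => ⟨(htrap k hk).2.le, (he.trap_succ hc hroot (htrap k hk)).2⟩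

lemma exists_trap (he : IsReducedOrbit c e) (hc : 1 ≤ c) (hε : 0 < ε)
    (hroot : codaMap c ε = 0) (h0 : -(1 / 2) < e 0) (h0' : e 0 < 0) :
    ∃ K, 0 < |e K| ∧ |e K| < ε := by
  by_contra! hS
  have hc0 : 0 < c := by linarith
  have hne : ∀ k, e k ≠ -ε := by
    intro k hk
    have h1 : e (k + 1) = 0 := by
      rw [he.succ_of_neg k (by linarith), hk, neg_neg, hroot, neg_zero]
    have h2 := he.succ_succ_of_neg_of_eq_zero k (by linarith) h1
    rw [codaMap_zero, neg_neg] at h2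
    have := hS (k + 2) (by rw [h2]; positivity)
    rw [h2, abs_of_pos (by positivity)] at this
    linarith [one_div_eight_mul_lt_of_codaMap_eq_zero hc hε.le hroot]
  have hδ : 0 < (1 / 4 - e 0 ^ 2) / (2 * c) := div_pos (by nlinarith) (by positivity)
  set δ := (1 / 4 - e 0 ^ 2) / (2 * c)
  have hgrow : ∀ k : ℕ, e 0 + k * δ ≤ e k ∧ e k < -ε := by
    intro k
    induction k with
    | zero =>
      have := hS 0 (abs_pos.2 h0'.ne)
      rw [abs_of_neg h0'] at this
      exact ⟨by simp, lt_of_le_of_ne (by linarith) (hne 0)⟩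
    | succ k ih =>
      have hk : e k < 0 := by linarith
      have hstep := he.succ_of_neg k hk
      have hlt : e (k + 1) < 0 := by
        rw [hstep]; linarith [codaMap_pos hc0 hε.le hroot (x := -e k) (by linarith)]
      have hle : e k + δ ≤ e (k + 1) :=
        hstep ▸ add_le_neg_codaMap_neg hc0 h0 (by nlinarith [Nat.cast_nonneg (α := ℝ) k]) hk
      have := hS (k + 1) (abs_pos.2 hlt.ne)
      rw [abs_of_neg hlt] at this
      exact ⟨by push_cast; linarith, lt_of_le_of_ne (by linarith) (hne _)⟩
  obtain ⟨k, hk⟩ := exists_nat_gt (-e 0 / δ)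
  rw [div_lt_iff₀ hδ] at hk
  linarith [hgrow k]

lemma eventually_oscillates (he : IsReducedOrbit c e) (hc : 1 ≤ c) (hε : 0 < ε)
    (hroot : codaMap c ε = 0) (h0 : -(1 / 2) < e 0) (h0' : e 0 < 0) :
    ∃ K, ∀ k ≥ K, |e k| ≤ ε ∧ e k * e (k + 1) < 0 :=
  let ⟨_, hK⟩ := he.exists_trap hc hε hroot h0 h0'
  ⟨_, he.forall_ge_of_trap hc hroot hK⟩

end IsReducedOrbit

section CompleteGraph

variable {ι : Type*}

lemma sum_eq_card_div_two [Fintype ι] (σ : Equiv.Perm ι) (f : ι → ℝ)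
    (hf : ∀ j, f (σ j) = 1 - f j) : ∑ j, f j = Fintype.card ι / 2 := by
  have h := Equiv.sum_comp σ f
  simp only [hf, sum_sub_distrib, sum_const, card_univ, nsmul_eq_mul, mul_one] at h
  linarith

lemma one_le_card_sub_one [Fintype ι] (hι : 2 ≤ Fintype.card ι) :
    (1 : ℝ) ≤ Fintype.card ι - 1 := by
  have : (2 : ℝ) ≤ Fintype.card ι := by exact_mod_cast hι
  linarith

noncomputable def codaAction (p : ι → ℕ → ℝ) (i : ι) (k : ℕ) : ℕ :=
  if p i k < 1 / 2 ∨ (p i k = 1 / 2 ∧ p i (k - 1) < 1 / 2) then 0 else 1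

variable {p : ι → ℕ → ℝ} {i j : ι} {k : ℕ}

lemma codaAction_of_lt (h : p i k < 1 / 2) : codaAction p i k = 0 :=
  if_pos (Or.inl h)

lemma codaAction_of_gt (h : 1 / 2 < p i k) : codaAction p i k = 1 :=
  if_neg (by rintro (h' | ⟨h', -⟩) <;> linarith)

lemma codaAction_of_eq_of_lt (h : p i k = 1 / 2) (h' : p i (k - 1) < 1 / 2) :
    codaAction p i k = 0 :=
  if_pos (Or.inr ⟨h, h'⟩)

lemma codaAction_of_eq_of_gt (h : p i k = 1 / 2) (h' : 1 / 2 < p i (k - 1)) :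
    codaAction p i k = 1 :=
  if_neg (by rintro (h'' | ⟨-, h''⟩) <;> linarith)

lemma codaAction_eq_zero_or_one : codaAction p i k = 0 ∨ codaAction p i k = 1 := by
  unfold codaAction; split_ifs <;> simp

lemma codaAction_eq_one_sub (h : p i k = 1 - p j k) (h' : p i (k - 1) = 1 - p j (k - 1))
    (hj : ¬(p j k = 1 / 2 ∧ p j (k - 1) = 1 / 2)) :
    (codaAction p i k : ℝ) = 1 - codaAction p j k := by
  rcases lt_trichotomy (p j k) (1 / 2) with hlt | heq | hgt
  · rw [codaAction_of_gt (by linarith), codaAction_of_lt hlt]; norm_num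
  · rcases lt_or_gt_of_ne (fun h'' => hj ⟨heq, h''⟩) with hlt' | hgt'
    · rw [codaAction_of_eq_of_gt (by linarith) (by linarith), codaAction_of_eq_of_lt heq hlt']
      norm_num
    · rw [codaAction_of_eq_of_lt (by linarith) (by linarith), codaAction_of_eq_of_gt heq hgt']
      norm_num
  · rw [codaAction_of_lt (by linarith), codaAction_of_gt hgt]; norm_num

variable [Fintype ι] [DecidableEq ι]

def IsCompleteCodaOrbit (p : ι → ℕ → ℝ) : Prop :=
  ∀ i k, p i (k + 1) = p i k + p i k * (1 - p i k) / (univ \ {i}).card *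
    ∑ j ∈ univ \ {i}, ((codaAction p j k : ℝ) - p i k)

namespace IsCompleteCodaOrbit

lemma succ_eq (hp : IsCompleteCodaOrbit p)
    (hsum : ∑ j, (codaAction p j k : ℝ) = Fintype.card ι / 2) (i : ι) :
    p i (k + 1) = p i k + p i k * (1 - p i k) / ((Fintype.card ι : ℝ) - 1) *
      ((Fintype.card ι : ℝ) / 2 - codaAction p i k - ((Fintype.card ι : ℝ) - 1) * p i k) := by
  rw [hp i k, sdiff_singleton_eq_erase, card_erase_of_mem (mem_univ i), card_univ,
    Nat.cast_sub (Fintype.card_pos_iff.2 ⟨i⟩), sum_sub_distrib, sum_erase_eq_sub (mem_univ i),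
    hsum, sum_const, card_erase_of_mem (mem_univ i), card_univ, nsmul_eq_mul,
    Nat.cast_sub (Fintype.card_pos_iff.2 ⟨i⟩)]
  ring

lemma mirror (hp : IsCompleteCodaOrbit p) (hι : 2 ≤ Fintype.card ι) (σ : Equiv.Perm ι)
    (h0 : ∀ j, p (σ j) 0 = 1 - p j 0) (hhalf : ∀ j, p j 0 ≠ 1 / 2) (k : ℕ) (j : ι) :
    p (σ j) k = 1 - p j k ∧ (codaAction p (σ j) k : ℝ) = 1 - codaAction p j k := by
  suffices h : ∀ k, (∀ j, p (σ j) k = 1 - p j k) ∧ (∀ j, p (σ j) (k - 1) = 1 - p j (k - 1)) ∧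
      ∀ j, ¬(p j k = 1 / 2 ∧ p j (k - 1) = 1 / 2) by
    obtain ⟨h, h', hj⟩ := h k
    exact ⟨h j, codaAction_eq_one_sub (h j) (h' j) (hj j)⟩
  have hc := one_le_card_sub_one hι
  intro k
  induction k with
  | zero => exact ⟨h0, h0, fun j hj => hhalf j hj.1⟩
  | succ k ih =>
    obtain ⟨h, h', hj⟩ := ih
    have ha j : (codaAction p (σ j) k : ℝ) = 1 - codaAction p j k :=
      codaAction_eq_one_sub (h j) (h' j) (hj j)
    have hsum := sum_eq_card_div_two σ (fun j => (codaAction p j k : ℝ)) ha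
    refine ⟨fun j => ?_, h, fun j ⟨hk1, hk⟩ => ?_⟩
    · rw [hp.succ_eq hsum, hp.succ_eq hsum, h j, ha j]
      ring
    · -- an agent at `1/2` moves by `(1/2 - a) / (4c) ≠ 0`
      have hstep := hp.succ_eq hsum j
      rw [Nat.add_sub_cancel] at hk
      rw [hk1, hk] at hstep
      rcases codaAction_eq_zero_or_one (p := p) (i := j) (k := k) with ha | ha <;>
        rw [ha] at hstep <;> push_cast at hstep <;> field_simp at hstep <;> linarith

lemma isReducedOrbit (hp : IsCompleteCodaOrbit p) (hι : 2 ≤ Fintype.card ι)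
    (hsum : ∀ k, ∑ j, (codaAction p j k : ℝ) = Fintype.card ι / 2) (i : ι) :
    IsReducedOrbit ((Fintype.card ι : ℝ) - 1) (fun k => p i k - 1 / 2) := by
  have hc : (Fintype.card ι : ℝ) - 1 ≠ 0 := by linarith [one_le_card_sub_one hι]
  refine ⟨fun k hk => ?_, fun k hk => ?_, fun k hk hk1 => ?_⟩
  · rw [hp.succ_eq (hsum k), codaAction_of_gt (by linarith)]
    unfold codaMap; field_simp; ring
  · rw [hp.succ_eq (hsum k), codaAction_of_lt (by linarith)]
    unfold codaMap; field_simp; ring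
  · have hhalf : p i (k + 1) = 1 / 2 := by linarith
    rw [hp.succ_eq (hsum (k + 1)), codaAction_of_eq_of_lt hhalf (by simpa using hk), hhalf]
    unfold codaMap; field_simp; ring

theorem eventually_oscillates {ε : ℝ} (hp : IsCompleteCodaOrbit p) (hι : 2 ≤ Fintype.card ι)
    (σ : Equiv.Perm ι) (h0 : ∀ j, p (σ j) 0 = 1 - p j 0) (hpos : ∀ j, 0 < p j 0)
    (hhalf : ∀ j, p j 0 ≠ 1 / 2) (hε : 0 < ε)
    (hroot : codaMap ((Fintype.card ι : ℝ) - 1) ε = 0) :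
    ∃ K, ∀ k ≥ K, ∀ j, |p j k - 1 / 2| ≤ ε ∧ (p j k - 1 / 2) * (p j (k + 1) - 1 / 2) < 0 := by
  have hc := one_le_card_sub_one hι
  have hmirror := hp.mirror hι σ h0 hhalf
  have horbit := hp.isReducedOrbit hι fun k =>
    sum_eq_card_div_two σ (fun j => (codaAction p j k : ℝ)) fun j => (hmirror k j).2
  have hagent j : ∃ K, ∀ k ≥ K,
      |p j k - 1 / 2| ≤ ε ∧ (p j k - 1 / 2) * (p j (k + 1) - 1 / 2) < 0 := by
    rcases lt_or_gt_of_ne (hhalf j) with hlow | hhigh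
    · exact (horbit j).eventually_oscillates hc hε hroot (by linarith [hpos j]) (by linarith)
    · obtain ⟨K, hK⟩ := (horbit (σ j)).eventually_oscillates hc hε hroot
        (by linarith [h0 j, hpos (σ j)]) (by linarith [h0 j])
      have hneg k : p j k - 1 / 2 = -(p (σ j) k - 1 / 2) := by rw [(hmirror k j).1]; ring
      refine ⟨K, fun k hk => ?_⟩
      rw [hneg, hneg, abs_neg, neg_mul_neg]
      exact hK k hk
  choose K hK using hagent
  exact ⟨univ.sup K, fun k hk j => hK j k ((le_sup (mem_univ j)).trans hk)⟩

end IsCompleteCodaOrbit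

end CompleteGraph

def swapHalves (m : ℕ) (j : Fin (2 * m)) : Fin (2 * m) :=
  if h : j.val < m then ⟨j.val + m, by omega⟩ else ⟨j.val - m, by omega⟩

lemma swapHalves_val (m : ℕ) (j : Fin (2 * m)) :
    (swapHalves m j).val = if j.val < m then j.val + m else j.val - m := by
  unfold swapHalves; split_ifs <;> rfl

lemma swapHalves_involutive (m : ℕ) : Function.Involutive (swapHalves m) := by
  intro j
  ext
  rw [swapHalves_val, swapHalves_val]
  split_ifs <;> omega

lemma mirror_of_lower_half {m : ℕ} {x : Fin (2 * m) → ℝ}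
    (h : ∀ j : Fin (2 * m), j.val < m → 0 < x j ∧ x j < 1 / 2 ∧ x (swapHalves m j) = 1 - x j)
    (j : Fin (2 * m)) : 0 < x j ∧ x j ≠ 1 / 2 ∧ x (swapHalves m j) = 1 - x j := by
  by_cases hj : j.val < m
  · obtain ⟨h1, h2, h3⟩ := h j hj
    exact ⟨h1, h2.ne, h3⟩
  · have hlow : (swapHalves m j).val < m := by
      rw [swapHalves_val, if_neg hj]; omega
    obtain ⟨h1, h2, h3⟩ := h _ hlow
    rw [swapHalves_involutive m j] at h3
    exact ⟨by linarith, by linarith, by linarith⟩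

/-- CODA model on the complete graph, even number of agents, initial opinions
symmetric about `1/2`: with `ε*` the unique positive root of
`x³ + x²/(2(n-1)) + (3/4)x - 1/(8(n-1))`, one has `ε* < 1/(6(n-1))` and eventually
every opinion stays within `ε*` of `1/2` and oscillates around `1/2` at each step. -/
theorem stmt_15
    (n m : ℕ) (hm : 1 ≤ m) (hn : n = 2 * m)
    (N : Fin n → Finset (Fin n))
    (hcomplete : ∀ i, N i = Finset.univ \ {i})
    (p : Fin n → ℕ → ℝ) (q : Fin n → ℕ → ℕ)
    (hq0 : ∀ i k, (p i k < 1 / 2 ∨ (p i k = 1 / 2 ∧ p i (k - 1) < 1 / 2)) → q i k = 0)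
    (hq1 : ∀ i k, ¬(p i k < 1 / 2 ∨ (p i k = 1 / 2 ∧ p i (k - 1) < 1 / 2)) → q i k = 1)
    (hupd : ∀ i k, p i (k + 1) =
      p i k + p i k * (1 - p i k) / (N i).card * ∑ j ∈ N i, ((q j k : ℝ) - p i k))
    (hsym0 : ∀ i : Fin n, ∀ h : i.val < m, ∃ η : ℝ, η ∈ Set.Ioo (0 : ℝ) (1 / 2) ∧
      p i 0 = 1 / 2 - η ∧ p ⟨i.val + m, by omega⟩ 0 = 1 / 2 + η)
    (g : ℝ → ℝ)
    (hg : ∀ x, g x = x ^ 3 + x ^ 2 / (2 * ((n : ℝ) - 1)) + 3 / 4 * x -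
      1 / (8 * ((n : ℝ) - 1)))
    (εstar : ℝ) (hεpos : 0 < εstar) (hεroot : g εstar = 0) :
    εstar < 1 / (6 * ((n : ℝ) - 1)) ∧
    ∃ kstar : ℕ, ∀ k ≥ kstar, ∀ j : Fin n,
      |p j k - 1 / 2| ≤ εstar ∧ (p j k - 1 / 2) * (p j (k + 1) - 1 / 2) < 0 := by
  subst hn
  have hq : q = codaAction p := funext₂ fun i k => by
    unfold codaAction; split_ifs with h
    exacts [hq0 i k h, hq1 i k h]
  obtain rfl : N = fun i => univ \ {i} := funext hcomplete
  subst hq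
  have hroot : codaMap ((Fintype.card (Fin (2 * m)) : ℝ) - 1) εstar = 0 := by
    rw [Fintype.card_fin, ← hεroot, hg]; rfl
  have hinit := mirror_of_lower_half (x := fun j => p j 0) fun j hj => by
    obtain ⟨η, hη, hlow, hhigh⟩ := hsym0 j hj
    simp only [swapHalves, dif_pos hj, hlow, hhigh]
    exact ⟨by linarith [hη.2], by linarith [hη.1], by ring⟩
  have hcard : 2 ≤ Fintype.card (Fin (2 * m)) := by rw [Fintype.card_fin]; omega
  refine ⟨?_, IsCompleteCodaOrbit.eventually_oscillates hupd hcard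
    (swapHalves_involutive m).toPerm (fun j => (hinit j).2.2) (fun j => (hinit j).1)
    (fun j => (hinit j).2.1) hεpos hroot⟩
  have hc := one_le_card_sub_one hcard
  rw [Fintype.card_fin] at hroot hc
  exact lt_one_div_six_mul_of_codaMap_eq_zero (by linarith) hεpos hroot
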